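/- Define K(s,t) = 1 + st + ∫₀¹ max(t−u,0)·max(s−u,0) du and K_G(s,t) = K(s,t) + (−1 + (s+t)/2 − st/3)·(st)² for s,t ∈ [0,1]. Then K_G is the reproducing kernel of the space of H² functions on [0,1] vanishing to first order at both endpoints, for the inner product ⟨f,g⟩ = ∫₀¹ f'' g'': precisely, for every t ∈ [0,1] and every C² function f : [0,1] → ℝ with f(0) = f'(0) = f(1) = f'(1) = 0, one has ∫₀¹ f''(s) · ∂²ₛK_G(s,t) ds = f(t), where ∂²ₛ denotes the second partial derivative with respect to the first variable; explicitly ∂²ₛK_G(s,t) = max(t−s,0) + t²(−2 + t + 3s − 2st). -/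

import Mathlib

open Set intervalIntegral

/-- The reproducing kernel `K(s,t) = 1 + st + ∫₀¹ (t−u)₊ (s−u)₊ du` of `H²([0,1])`. -/
noncomputable def Kker (s t : ℝ) : ℝ :=
  1 + s * t + ∫ u in (0:ℝ)..1, max (t - u) 0 * max (s - u) 0

/-- The kernel `K_G(s,t) = K(s,t) + (−1 + (s+t)/2 − st/3)(st)²` of `H₀²([0,1])`. -/
noncomputable def KGker (s t : ℝ) : ℝ :=
  Kker s t + (-1 + (s + t) / 2 - s * t / 3) * (s * t) ^ 2

/-!
For `s, t ∈ [0,1]` the integral defining `K` equals `st²/2 − t³/6 + (t−s)₊³/6`, so `s ↦ K_G(s,t)`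
is a cubic spline with a single knot at `t`; differentiating twice gives `(t−s)₊` plus an affine
function of `s`. Paired with `f''`, the kink `(t−s)₊` returns `f(t) − f(0) − t f'(0)` (Taylor's
formula with integral remainder), and an affine function `c + ds` returns
`(c + d) f'(1) − c f'(0) − d (f(1) − f(0))`; all boundary values vanish for `f ∈ H₀²`.
-/

theorem integral_eq_sub_of_hasDerivWithinAt_Icc {φ φ' : ℝ → ℝ} {a b : ℝ} (hab : a ≤ b)
    (hφ : ∀ x ∈ Icc a b, HasDerivWithinAt φ (φ' x) (Icc a b) x)
    (hφ' : ContinuousOn φ' (Icc a b)) :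
    ∫ x in a..b, φ' x = φ b - φ a :=
  integral_eq_sub_of_hasDerivAt_of_le hab (fun x hx => (hφ x hx).continuousWithinAt)
    (fun x hx => (hφ x (Ioo_subset_Icc_self hx)).hasDerivAt (Icc_mem_nhds hx.1 hx.2))
    (hφ'.intervalIntegrable_of_Icc hab)

section SecondDerivative

variable {f f' f'' : ℝ → ℝ} {a b : ℝ}

theorem integral_second_deriv_mul_sub (hab : a ≤ b)
    (hf : ∀ x ∈ Icc a b, HasDerivWithinAt f (f' x) (Icc a b) x)
    (hf' : ∀ x ∈ Icc a b, HasDerivWithinAt f' (f'' x) (Icc a b) x)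
    (hf'' : ContinuousOn f'' (Icc a b)) :
    ∫ x in a..b, f'' x * (b - x) = f b - f a - (b - a) * f' a := by
  have hφ : ∀ x ∈ Icc a b,
      HasDerivWithinAt (fun x => (b - x) * f' x + f x) (f'' x * (b - x)) (Icc a b) x := by
    intro x hx
    refine (((hasDerivWithinAt_id x _).const_sub b).mul (hf' x hx)).add (hf x hx)
      |>.congr_deriv ?_
    simp only [id_eq]
    ring
  rw [integral_eq_sub_of_hasDerivWithinAt_Icc hab hφ (hf''.mul (by fun_prop))]
  ring

theorem integral_second_deriv_mul_posPart {t : ℝ} (ht : t ∈ Icc a b)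
    (hf : ∀ x ∈ Icc a b, HasDerivWithinAt f (f' x) (Icc a b) x)
    (hf' : ∀ x ∈ Icc a b, HasDerivWithinAt f' (f'' x) (Icc a b) x)
    (hf'' : ContinuousOn f'' (Icc a b)) :
    ∫ x in a..b, f'' x * max (t - x) 0 = f t - f a - (t - a) * f' a := by
  have hsub : Icc a t ⊆ Icc a b := Icc_subset_Icc_right ht.2
  have hcont : ContinuousOn (fun x => f'' x * max (t - x) 0) (Icc a b) := hf''.mul (by fun_prop)
  have hleft : ∫ x in a..t, f'' x * max (t - x) 0 = ∫ x in a..t, f'' x * (t - x) :=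
    integral_congr fun x hx => by
      rw [uIcc_of_le ht.1] at hx
      simp only [max_eq_left (sub_nonneg.2 hx.2)]
  have hright : ∫ x in t..b, f'' x * max (t - x) 0 = 0 := by
    rw [integral_congr (g := fun _ => 0) fun x hx => ?_, integral_zero]
    rw [uIcc_of_le ht.2] at hx
    simp [max_eq_right (sub_nonpos.2 hx.1)]
  rw [← integral_add_adjacent_intervals ((hcont.mono hsub).intervalIntegrable_of_Icc ht.1)
    ((hcont.mono (Icc_subset_Icc_left ht.1)).intervalIntegrable_of_Icc ht.2), hleft, hright,
    add_zero]
  exact integral_second_deriv_mul_sub ht.1 (fun x hx => (hf x (hsub hx)).mono hsub)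
    (fun x hx => (hf' x (hsub hx)).mono hsub) (hf''.mono hsub)

theorem integral_second_deriv_mul_affine (hab : a ≤ b) (c d : ℝ)
    (hf : ∀ x ∈ Icc a b, HasDerivWithinAt f (f' x) (Icc a b) x)
    (hf' : ∀ x ∈ Icc a b, HasDerivWithinAt f' (f'' x) (Icc a b) x)
    (hf'' : ContinuousOn f'' (Icc a b)) :
    ∫ x in a..b, f'' x * (c + d * x) =
      (c + d * b) * f' b - (c + d * a) * f' a - d * (f b - f a) := by
  have hφ : ∀ x ∈ Icc a b, HasDerivWithinAt (fun x => (c + d * x) * f' x - d * f x)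
      (f'' x * (c + d * x)) (Icc a b) x := by
    intro x hx
    refine ((((hasDerivWithinAt_id x _).const_mul d).const_add c).mul (hf' x hx)).sub
      ((hf x hx).const_mul d) |>.congr_deriv ?_
    simp only [id_eq]
    ring
  rw [integral_eq_sub_of_hasDerivWithinAt_Icc hab hφ (hf''.mul (by fun_prop))]
  ring

end SecondDerivative

theorem hasDerivAt_posPart_pow {n : ℕ} (hn : n ≠ 0) (x : ℝ) :
    HasDerivAt (fun x => max x 0 ^ (n + 1)) ((n + 1) * max x 0 ^ n) x := by
  refine hasDerivAt_of_hasDerivAt_of_ne' (f := fun x : ℝ => max x 0 ^ (n + 1))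
    (g := fun x => (n + 1) * max x 0 ^ n) (x := 0) (fun y hy => ?_) (by fun_prop) (by fun_prop) x
  rcases hy.lt_or_gt with hy | hy
  · have hzero : (fun x : ℝ => max x 0 ^ (n + 1)) =ᶠ[nhds y] fun _ => 0 := by
      filter_upwards [Iio_mem_nhds hy] with z hz
      simp [max_eq_right (mem_Iio.1 hz).le]
    simpa [max_eq_right hy.le, hn] using (hasDerivAt_const y (0 : ℝ)).congr_of_eventuallyEq hzero
  · have hpow : (fun x : ℝ => max x 0 ^ (n + 1)) =ᶠ[nhds y] fun x => x ^ (n + 1) := by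
      filter_upwards [Ioi_mem_nhds hy] with z hz
      rw [max_eq_left (mem_Ioi.1 hz).le]
    simpa [max_eq_left hy.le] using (hasDerivAt_pow (n + 1) y).congr_of_eventuallyEq hpow

theorem hasDerivAt_cubic_add_posPart_cube (a b c d t x : ℝ) :
    HasDerivAt (fun x => a + b * x + c * x ^ 2 + d * x ^ 3 + max (t - x) 0 ^ 3 / 6)
      (b + 2 * c * x + 3 * d * x ^ 2 - max (t - x) 0 ^ 2 / 2) x := by
  have hknot := (hasDerivAt_posPart_pow two_ne_zero (t - x)).comp x ((hasDerivAt_id x).const_sub t)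
  refine ((((hasDerivAt_const x a).add ((hasDerivAt_id x).const_mul b)).add
    ((hasDerivAt_pow 2 x).const_mul c)).add ((hasDerivAt_pow 3 x).const_mul d)).add
    (hknot.div_const 6) |>.congr_deriv ?_
  push_cast
  ring

theorem hasDerivAt_quadratic_sub_posPart_sq (b c d t x : ℝ) :
    HasDerivAt (fun x => b + c * x + d * x ^ 2 - max (t - x) 0 ^ 2 / 2)
      (c + 2 * d * x + max (t - x) 0) x := by
  have hknot := (hasDerivAt_posPart_pow one_ne_zero (t - x)).comp x ((hasDerivAt_id x).const_sub t)
  refine (((hasDerivAt_const x b).add ((hasDerivAt_id x).const_mul c)).add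
    ((hasDerivAt_pow 2 x).const_mul d)).sub (hknot.div_const 2) |>.congr_deriv ?_
  push_cast
  ring

theorem integral_posPart_mul_posPart {a b : ℝ} (ha : a ∈ Icc (0:ℝ) 1) (hab : a ≤ b) :
    ∫ u in (0:ℝ)..1, max (b - u) 0 * max (a - u) 0 = b * a ^ 2 / 2 - a ^ 3 / 6 := by
  have hcube (u : ℝ) : HasDerivAt (fun u => (b - u) ^ 3 / 6) (-(b - u) ^ 2 / 2) u := by
    refine (((hasDerivAt_id u).const_sub b).pow 3).div_const 6 |>.congr_deriv ?_
    simp only [id_eq]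
    ring
  have hsq (u : ℝ) : HasDerivAt (fun u => -(b - u) ^ 2 / 2) (b - u) u := by
    refine (((hasDerivAt_id u).const_sub b).pow 2).neg.div_const 2 |>.congr_deriv ?_
    simp only [id_eq]
    ring
  -- where `a - u > 0` also `b - u > 0`, and `b - u` is the second derivative of `(b - u)³/6`
  calc ∫ u in (0:ℝ)..1, max (b - u) 0 * max (a - u) 0
      = ∫ u in (0:ℝ)..1, (b - u) * max (a - u) 0 := integral_congr fun u _ => by
        rcases le_total a u with hau | hua
        · simp [max_eq_right (sub_nonpos.2 hau)]
        · rw [max_eq_left (by linarith)]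
    _ = (b - a) ^ 3 / 6 - (b - 0) ^ 3 / 6 - (a - 0) * (-(b - 0) ^ 2 / 2) :=
        integral_second_deriv_mul_posPart ha (fun u _ => (hcube u).hasDerivWithinAt)
          (fun u _ => (hsq u).hasDerivWithinAt) (by fun_prop)
    _ = b * a ^ 2 / 2 - a ^ 3 / 6 := by ring

theorem Kker_eq {s t : ℝ} (hs : s ∈ Icc (0:ℝ) 1) (ht : t ∈ Icc (0:ℝ) 1) :
    Kker s t = 1 + s * t + s * t ^ 2 / 2 - t ^ 3 / 6 + max (t - s) 0 ^ 3 / 6 := by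
  unfold Kker
  rcases le_total s t with hst | hts
  · rw [integral_posPart_mul_posPart hs hst, max_eq_left (sub_nonneg.2 hst)]
    ring
  · simp_rw [mul_comm (max (t - _) 0)]
    rw [integral_posPart_mul_posPart ht hts, max_eq_right (sub_nonpos.2 hts)]
    ring

theorem eqOn_KGker_spline {t : ℝ} (ht : t ∈ Icc (0:ℝ) 1) :
    EqOn (fun s => KGker s t)
      (fun s => (1 - t ^ 3 / 6) + (t + t ^ 2 / 2) * s + (-t ^ 2 + t ^ 3 / 2) * s ^ 2
        + (t ^ 2 / 2 - t ^ 3 / 3) * s ^ 3 + max (t - s) 0 ^ 3 / 6) (Icc 0 1) := fun s hs => by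
  simp only [KGker, Kker_eq hs ht]
  ring

theorem eqOn_derivWithin_Icc_of_hasDerivAt {f g g' : ℝ → ℝ} {a b : ℝ} (hab : a < b)
    (hfg : EqOn f g (Icc a b)) (hg : ∀ x, HasDerivAt g (g' x) x) :
    EqOn (derivWithin f (Icc a b)) g' (Icc a b) := fun x hx => by
  rw [derivWithin_congr hfg (hfg hx)]
  exact (hg x).hasDerivWithinAt.derivWithin (uniqueDiffOn_Icc hab x hx)

theorem derivWithin_derivWithin_KGker {s t : ℝ} (hs : s ∈ Icc (0:ℝ) 1) (ht : t ∈ Icc (0:ℝ) 1) :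
    derivWithin (derivWithin (fun σ => KGker σ t) (Icc 0 1)) (Icc 0 1) s =
      max (t - s) 0 + t ^ 2 * (-2 + t + 3 * s - 2 * s * t) := by
  have h1 := eqOn_derivWithin_Icc_of_hasDerivAt zero_lt_one (eqOn_KGker_spline ht)
    (hasDerivAt_cubic_add_posPart_cube _ _ _ _ t)
  have h2 := eqOn_derivWithin_Icc_of_hasDerivAt zero_lt_one h1
    (hasDerivAt_quadratic_sub_posPart_sq _ _ _ t)
  rw [h2 hs]
  ring

/-- `K_G` is the reproducing kernel of the space of `H²` functions on `[0,1]`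
vanishing to first order at both endpoints, with inner product `∫₀¹ f'' g''`: its second
`s`-derivative is `∂²ₛK_G(s,t) = (t−s)₊ + t²(−2 + t + 3s − 2st)` and for every `C²` function
`f` with `f(0) = f'(0) = f(1) = f'(1) = 0` one has `∫₀¹ f''(s) ∂²ₛK_G(s,t) ds = f(t)`. -/
theorem stmt_14 :
    ∀ t ∈ Icc (0:ℝ) 1,
      (∀ s ∈ Icc (0:ℝ) 1,
        derivWithin (derivWithin (fun σ => KGker σ t) (Icc (0:ℝ) 1)) (Icc (0:ℝ) 1) s =
          max (t - s) 0 + t ^ 2 * (-2 + t + 3 * s - 2 * s * t)) ∧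
      ∀ f f' f'' : ℝ → ℝ,
        (∀ s ∈ Icc (0:ℝ) 1, HasDerivWithinAt f (f' s) (Icc (0:ℝ) 1) s) →
        (∀ s ∈ Icc (0:ℝ) 1, HasDerivWithinAt f' (f'' s) (Icc (0:ℝ) 1) s) →
        ContinuousOn f'' (Icc (0:ℝ) 1) →
        f 0 = 0 → f' 0 = 0 → f 1 = 0 → f' 1 = 0 →
        (∫ s in (0:ℝ)..1, f'' s * (max (t - s) 0 + t ^ 2 * (-2 + t + 3 * s - 2 * s * t)))
          = f t := by
  intro t ht
  refine ⟨fun s hs => derivWithin_derivWithin_KGker hs ht,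
    fun f f' f'' hf hf' hf'' hf0 hf'0 hf1 hf'1 => ?_⟩
  have hsplit : ∀ s, f'' s * (max (t - s) 0 + t ^ 2 * (-2 + t + 3 * s - 2 * s * t)) =
      f'' s * max (t - s) 0 + f'' s * (t ^ 2 * (t - 2) + t ^ 2 * (3 - 2 * t) * s) :=
    fun s => by ring
  have hint (g : ℝ → ℝ) (hg : Continuous g) :
      IntervalIntegrable (fun s => f'' s * g s) MeasureTheory.volume 0 1 :=
    (hf''.mul hg.continuousOn).intervalIntegrable_of_Icc zero_le_one
  simp_rw [hsplit]
  rw [integral_add (hint (fun s => max (t - s) 0) (by fun_prop))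
      (hint (fun s => t ^ 2 * (t - 2) + t ^ 2 * (3 - 2 * t) * s) (by fun_prop)),
    integral_second_deriv_mul_posPart ht hf hf' hf'',
    integral_second_deriv_mul_affine zero_le_one _ _ hf hf' hf'', hf0, hf'0, hf1, hf'1]
  ring
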